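/- arXiv:1201.5490 — 5 statements merged into one kernel-verified Lean document; each statement's English description precedes it below -/
import Mathlib

section
/- Let 0 < q < 1 and α > 0 be real, d an odd positive integer, χ : ℤ → ℂ with period d, w a complex number with |w| < 1, x ≥ 0 real, and n a nonnegative integer. Then (1+q) · Σ_{m=0}^∞ (-1)^m w^m χ(m) [x+m]_{q^α}^n = ((1+q)/(1 - q^α)^n) · Σ_{l=0}^{d-1} (-1)^l w^l χ(l) Σ_{k=0}^n C(n,k) (-1)^k q^{αk(x+l)} / (1 + q^{αkd} w^d). -/
/-!
Expanding `[x+m]^n = (1 - q^{α(x+m)})^n / (1 - q^α)^n` binomially turns the series into a finite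
combination of series `∑ χ(m) zₖ^m` with `zₖ = -w q^{αk}`, `‖zₖ‖ < 1`. For a `d`-periodic `χ` such
a series satisfies `S = ∑_{l<d} χ(l) z^l + z^d S`, and `zₖ^d = -q^{αkd} w^d` because `d` is odd.
-/

/-- The weighted q-bracket `[y]_{q^α} = (1 - q^{αy})/(1 - q^α)`. -/
noncomputable def qbr (q α y : ℝ) : ℝ := (1 - q ^ (α * y)) / (1 - q ^ α)

open Finset Function

theorem Summable.hasSum_of_add_eq_mul {K : Type*} [Field K] [TopologicalSpace K]
    [IsTopologicalRing K] [T2Space K] {f : ℕ → K} {c : K} {d : ℕ} (hf : Summable f)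
    (hfd : ∀ m, f (m + d) = c * f m) (hc : c ≠ 1) :
    HasSum f ((∑ l ∈ range d, f l) / (1 - c)) := by
  have hsplit := hf.sum_add_tsum_nat_add d
  simp only [hfd, tsum_mul_left] at hsplit
  convert hf.hasSum
  rw [div_eq_iff (sub_ne_zero.mpr hc.symm)]
  linear_combination hsplit

theorem Function.Periodic.norm_le_sum_range {E : Type*} [SeminormedAddGroup E] {f : ℕ → E}
    {d : ℕ} (hf : Periodic f d) (hd : 0 < d) (m : ℕ) : ‖f m‖ ≤ ∑ l ∈ range d, ‖f l‖ := by
  rw [← hf.map_mod_nat m]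
  exact single_le_sum (fun l _ => norm_nonneg (f l)) (mem_range.mpr (Nat.mod_lt m hd))

section PeriodicGeometric

variable {𝕜 : Type*} [NormedField 𝕜] [CompleteSpace 𝕜] {χ : ℕ → 𝕜} {d : ℕ} {z : 𝕜}

theorem Function.Periodic.summable_mul_geometric (hχ : Periodic χ d) (hd : 0 < d)
    (hz : ‖z‖ < 1) : Summable fun m => χ m * z ^ m := by
  refine Summable.of_norm_bounded
    ((summable_geometric_of_lt_one (norm_nonneg z) hz).mul_left (∑ l ∈ range d, ‖χ l‖)) ?_
  intro m
  rw [norm_mul, norm_pow]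
  gcongr
  exact hχ.norm_le_sum_range hd m

theorem Function.Periodic.hasSum_mul_geometric (hχ : Periodic χ d) (hd : 0 < d)
    (hz : ‖z‖ < 1) :
    HasSum (fun m => χ m * z ^ m) ((∑ l ∈ range d, χ l * z ^ l) / (1 - z ^ d)) := by
  refine (hχ.summable_mul_geometric hd hz).hasSum_of_add_eq_mul (fun m => ?_) ?_
  · rw [hχ m, pow_add]
    ring
  · refine ne_of_apply_ne norm ?_
    rw [norm_pow, norm_one]
    exact (pow_lt_one₀ (norm_nonneg z) hz hd.ne').ne

end PeriodicGeometric

theorem Real.rpow_mul_add_natCast {q : ℝ} (hq : 0 < q) (s x : ℝ) (m : ℕ) :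
    q ^ (s * (x + m)) = q ^ (s * x) * (q ^ s) ^ m := by
  rw [mul_add, Real.rpow_add hq, Real.rpow_mul_natCast hq.le]

theorem qbr_pow_eq_sum {q : ℝ} (hq : 0 < q) (α y : ℝ) (n : ℕ) :
    qbr q α y ^ n =
      (∑ k ∈ range (n + 1), (n.choose k : ℝ) * (-1) ^ k * q ^ (α * k * y)) / (1 - q ^ α) ^ n := by
  rw [qbr, div_pow, sub_eq_neg_add, add_pow]
  congr 1
  refine sum_congr rfl fun k _ => ?_
  rw [neg_pow, one_pow, mul_one, ← Real.rpow_mul_natCast hq.le, mul_right_comm α]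
  ring

theorem hasSum_twisted_rpow {q : ℝ} (hq0 : 0 < q) (hq1 : q < 1) {s : ℝ} (hs : 0 ≤ s)
    {d : ℕ} (hd : Odd d) (hd0 : 0 < d) {χ : ℕ → ℂ} (hχ : Periodic χ d) {w : ℂ} (hw : ‖w‖ < 1)
    (x : ℝ) :
    HasSum (fun m : ℕ => (-1 : ℂ) ^ m * w ^ m * χ m * ((q ^ (s * (x + m)) : ℝ) : ℂ))
      (∑ l ∈ range d, (-1 : ℂ) ^ l * w ^ l * χ l * ((q ^ (s * (x + l)) : ℝ) : ℂ) /
        (1 + ((q ^ (s * d) : ℝ) : ℂ) * w ^ d)) := by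
  have hqs : ‖((q ^ s : ℝ) : ℂ)‖ ≤ 1 := by
    rw [Complex.norm_real, Real.norm_of_nonneg (by positivity)]
    exact Real.rpow_le_one hq0.le hq1.le hs
  have hz : ‖-(w * ((q ^ s : ℝ) : ℂ))‖ < 1 := by
    rw [norm_neg, norm_mul]
    exact lt_of_le_of_lt (mul_le_of_le_one_right (norm_nonneg w) hqs) hw
  have hterm (m : ℕ) : ((q ^ (s * (x + m)) : ℝ) : ℂ) =
      ((q ^ (s * x) : ℝ) : ℂ) * ((q ^ s : ℝ) : ℂ) ^ m := by
    rw [Real.rpow_mul_add_natCast hq0, Complex.ofReal_mul, Complex.ofReal_pow]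
  have hval : ((q ^ (s * x) : ℝ) : ℂ) *
      ((∑ l ∈ range d, χ l * (-(w * ((q ^ s : ℝ) : ℂ))) ^ l) /
        (1 - (-(w * ((q ^ s : ℝ) : ℂ))) ^ d)) =
      ∑ l ∈ range d, (-1 : ℂ) ^ l * w ^ l * χ l * ((q ^ (s * (x + l)) : ℝ) : ℂ) /
        (1 + ((q ^ (s * d) : ℝ) : ℂ) * w ^ d) := by
    rw [hd.neg_pow, sub_neg_eq_add, Real.rpow_mul_natCast hq0.le, ← mul_div_assoc, mul_sum,
      sum_div]
    refine sum_congr rfl fun l _ => ?_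
    rw [hterm, neg_pow, mul_pow, mul_pow]
    push_cast
    ring
  rw [← hval]
  refine ((hχ.hasSum_mul_geometric hd0 hz).mul_left _).congr_fun fun m => ?_
  rw [hterm, neg_pow (w * _), mul_pow]
  ring

theorem twisted_qEuler_closed_form_general (q α : ℝ) (hq0 : 0 < q) (hq1 : q < 1) (hα : 0 < α)
    (d : ℕ) (hd : Odd d) (hd0 : 0 < d) (χ : ℤ → ℂ) (hχ : ∀ m : ℤ, χ (m + d) = χ m)
    (w : ℂ) (hw : ‖w‖ < 1) (x : ℝ) (n : ℕ) :
    (1 + (q : ℂ)) *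
        ∑' m : ℕ, (-1 : ℂ) ^ m * w ^ m * χ m * ((qbr q α (x + m) : ℝ) : ℂ) ^ n
      = ((1 + (q : ℂ)) / ((1 - ((q ^ α : ℝ) : ℂ)) ^ n)) *
          ∑ l ∈ Finset.range d, (-1 : ℂ) ^ l * w ^ l * χ l *
            ∑ k ∈ Finset.range (n + 1),
              (n.choose k : ℂ) * (-1 : ℂ) ^ k * ((q ^ (α * k * (x + l)) : ℝ) : ℂ) /
                (1 + ((q ^ (α * k * d) : ℝ) : ℂ) * w ^ d) := by
  have hχ' : Periodic (fun m : ℕ => χ m) d := fun m => by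
    simpa only [Nat.cast_add] using hχ m
  have hsum := (hasSum_sum fun k (_ : k ∈ range (n + 1)) =>
    (hasSum_twisted_rpow hq0 hq1 (by positivity : 0 ≤ α * k) hd hd0 hχ' hw x).mul_left
      ((n.choose k : ℂ) * (-1) ^ k)).div_const ((1 - ((q ^ α : ℝ) : ℂ)) ^ n)
  rw [(hsum.congr_fun fun m => ?_).tsum_eq]
  · rw [← mul_div_assoc, div_mul_eq_mul_div]
    congr 2
    simp_rw [mul_sum]
    rw [sum_comm]
    refine sum_congr rfl fun l _ => sum_congr rfl fun k _ => ?_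
    ring
  · rw [← Complex.ofReal_pow, qbr_pow_eq_sum hq0]
    push_cast
    rw [mul_div_assoc', mul_sum]
    congr 1
    refine sum_congr rfl fun k _ => ?_
    ring

/-- Closed form of the modified Dirichlet-type twisted q-Euler polynomial
`Ẽ_{n,q}^{(α,w)}(x|χ)`. -/
theorem twisted_qEuler_closed_form (q α : ℝ) (hq0 : 0 < q) (hq1 : q < 1) (hα : 0 < α)
    (d : ℕ) (hd : Odd d) (hd0 : 0 < d) (χ : ℤ → ℂ) (hχ : ∀ m : ℤ, χ (m + d) = χ m)
    (w : ℂ) (hw : ‖w‖ < 1) (x : ℝ) (hx : 0 ≤ x) (n : ℕ) :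
    (1 + (q : ℂ)) *
        ∑' m : ℕ, (-1 : ℂ) ^ m * w ^ m * χ m * ((qbr q α (x + m) : ℝ) : ℂ) ^ n
      = ((1 + (q : ℂ)) / ((1 - ((q ^ α : ℝ) : ℂ)) ^ n)) *
          ∑ l ∈ Finset.range d, (-1 : ℂ) ^ l * w ^ l * χ l *
            ∑ k ∈ Finset.range (n + 1),
              (n.choose k : ℂ) * (-1 : ℂ) ^ k * ((q ^ (α * k * (x + l)) : ℝ) : ℂ) /
                (1 + ((q ^ (α * k * d) : ℝ) : ℂ) * w ^ d) :=
  twisted_qEuler_closed_form_general q α hq0 hq1 hα d hd hd0 χ hχ w hw x n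
end

section
/- Let 0 < q < 1 and α > 0 be real, w complex with |w| < 1, x ≥ 0 real, and n a nonnegative integer. Define the modified twisted q-Euler polynomials E_{n,q}^{(α,w)}(x) := (1+q) Σ_{m=0}^∞ (-1)^m w^m [x+m]_{q^α}^n and numbers E_{n,q}^{(α,w)} := E_{n,q}^{(α,w)}(0). Then E_{n,q}^{(α,w)}(x) = Σ_{k=0}^n C(n,k) q^{α(n-k)x} E_{n-k,q}^{(α,w)} · [x]_{q^α}^k. -/
/-- Modified twisted q-Euler polynomial with weight α:
`E_{n,q}^{(α,w)}(x) = (1+q) Σ_{m≥0} (-1)^m w^m [x+m]_{q^α}^n`. -/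
noncomputable def Epoly (q α : ℝ) (w : ℂ) (n : ℕ) (x : ℝ) : ℂ :=
  (1 + (q : ℂ)) * ∑' m : ℕ, (-1 : ℂ) ^ m * w ^ m * ((qbr q α (x + m) : ℝ) : ℂ) ^ n

lemma qbr_add (q α : ℝ) (hq0 : 0 < q) (x y : ℝ) :
    qbr q α (x + y) = qbr q α x + q ^ (α * x) * qbr q α y := by
  have h : q ^ (α * (x + y)) = q ^ (α * x) * q ^ (α * y) := by
    rw [mul_add, Real.rpow_add hq0]
  unfold qbr
  rw [h]
  ring

lemma base_summable (q α : ℝ) (hq0 : 0 < q) (hq1 : q < 1) (hα : 0 < α)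
    (w : ℂ) (hw : ‖w‖ < 1) (j : ℕ) :
    Summable (fun m : ℕ => (-1 : ℂ) ^ m * w ^ m * ((qbr q α m : ℝ) : ℂ) ^ j) := by
  have hqa : q ^ α < 1 := Real.rpow_lt_one hq0.le hq1 hα
  have hpos : (0:ℝ) < 1 - q ^ α := by linarith
  apply Summable.of_norm_bounded (g := fun m => (1 / (1 - q ^ α)) ^ j * ‖w‖ ^ m)
  · exact (summable_geometric_of_lt_one (norm_nonneg w) hw).mul_left _
  · intro m
    have h1 : 0 ≤ 1 - q ^ (α * m) := by
      have := Real.rpow_le_one hq0.le hq1.le (by positivity : (0:ℝ) ≤ α * m)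
      linarith
    have h2 : 1 - q ^ (α * m) ≤ 1 := by
      have := Real.rpow_nonneg hq0.le (α * m)
      linarith
    have hb : |qbr q α m| ≤ 1 / (1 - q ^ α) := by
      rw [qbr, abs_of_nonneg (div_nonneg h1 hpos.le)]
      gcongr
    calc ‖(-1 : ℂ) ^ m * w ^ m * ((qbr q α m : ℝ) : ℂ) ^ j‖
        = ‖w‖ ^ m * |qbr q α m| ^ j := by
          simp [norm_mul, norm_pow, Complex.norm_real, Real.norm_eq_abs]
      _ ≤ ‖w‖ ^ m * (1 / (1 - q ^ α)) ^ j := by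
          gcongr
      _ = (1 / (1 - q ^ α)) ^ j * ‖w‖ ^ m := mul_comm _ _

/-- `E_{n,q}^{(α,w)}(x) = Σ_{k=0}^n C(n,k) q^{α(n-k)x} E_{n-k,q}^{(α,w)} [x]_{q^α}^k`. -/
theorem twisted_qEuler_poly_binomial (q α : ℝ) (hq0 : 0 < q) (hq1 : q < 1) (hα : 0 < α)
    (w : ℂ) (hw : ‖w‖ < 1) (x : ℝ) (hx : 0 ≤ x) (n : ℕ) :
    Epoly q α w n x
      = ∑ k ∈ Finset.range (n + 1),
          (n.choose k : ℂ) * ((q ^ (α * (n - k : ℕ) * x) : ℝ) : ℂ) * Epoly q α w (n - k) 0 *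
            ((qbr q α x : ℝ) : ℂ) ^ k := by
  set A : ℂ := ((qbr q α x : ℝ) : ℂ) with hA
  set c : ℂ := ((q ^ (α * x) : ℝ) : ℂ) with hc
  have S := base_summable q α hq0 hq1 hα w hw
  -- per-term expansion
  have hexp : ∀ m : ℕ, (-1 : ℂ) ^ m * w ^ m * ((qbr q α (x + m) : ℝ) : ℂ) ^ n
      = ∑ k ∈ Finset.range (n + 1),
          (A ^ k * c ^ (n - k) * (n.choose k : ℂ)) *
            ((-1 : ℂ) ^ m * w ^ m * ((qbr q α m : ℝ) : ℂ) ^ (n - k)) := by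
    intro m
    have h1 : ((qbr q α (x + m) : ℝ) : ℂ) = A + c * ((qbr q α m : ℝ) : ℂ) := by
      rw [qbr_add q α hq0 x m]; push_cast; ring
    rw [h1, add_pow, Finset.mul_sum]
    refine Finset.sum_congr rfl fun k hk => ?_
    rw [mul_pow]
    ring
  have hsum : ∀ k, Summable (fun m : ℕ =>
      (A ^ k * c ^ (n - k) * (n.choose k : ℂ)) *
        ((-1 : ℂ) ^ m * w ^ m * ((qbr q α m : ℝ) : ℂ) ^ (n - k))) :=
    fun k => (S (n - k)).mul_left _
  have key : ∑' m : ℕ, (-1 : ℂ) ^ m * w ^ m * ((qbr q α (x + m) : ℝ) : ℂ) ^ n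
      = ∑ k ∈ Finset.range (n + 1),
          (A ^ k * c ^ (n - k) * (n.choose k : ℂ)) *
            ∑' m : ℕ, (-1 : ℂ) ^ m * w ^ m * ((qbr q α m : ℝ) : ℂ) ^ (n - k) := by
    rw [tsum_congr hexp, Summable.tsum_finsetSum (fun k _ => hsum k)]
    exact Finset.sum_congr rfl fun k _ => tsum_mul_left
  have hcpow : ∀ k : ℕ, ((q ^ (α * (n - k : ℕ) * x) : ℝ) : ℂ) = c ^ (n - k) := by
    intro k
    rw [hc]
    norm_cast
    rw [show α * (n - k : ℕ) * x = (α * x) * (n - k : ℕ) by ring,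
      Real.rpow_mul hq0.le, Real.rpow_natCast]
  unfold Epoly
  rw [key, Finset.mul_sum]
  refine Finset.sum_congr rfl fun k _ => ?_
  have h0 : (∑' m : ℕ, (-1 : ℂ) ^ m * w ^ m * ((qbr q α ((0:ℝ) + m) : ℝ) : ℂ) ^ (n - k))
      = ∑' m : ℕ, (-1 : ℂ) ^ m * w ^ m * ((qbr q α m : ℝ) : ℂ) ^ (n - k) :=
    tsum_congr fun m => by rw [zero_add]
  rw [h0, hcpow k]
  ring
end

section
/- Let 0 < q < 1 and α > 0 be real, w complex with |w| < 1, d an odd positive integer, χ : ℤ → ℂ with period d, and let m be a nonnegative integer and n a positive multiple of d. With Ẽ_{m,q}^{(α,w)}(x | χ) := (1+q) Σ_{j=0}^∞ (-1)^j w^j χ(j) [x+j]_{q^α}^m, one has w^n · Ẽ_{m,q}^{(α,w)}(n | χ) + (-1)^{n-1} Ẽ_{m,q}^{(α,w)}(0 | χ) = (1+q) · Σ_{l=0}^{n-1} (-1)^{n-1-l} χ(l) w^l [l]_{q^α}^m. -/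
/-- Modified Dirichlet-type twisted q-Euler polynomial with weight α. -/
noncomputable def Etil (q α : ℝ) (w : ℂ) (χ : ℤ → ℂ) (m : ℕ) (x : ℝ) : ℂ :=
  (1 + (q : ℂ)) * ∑' j : ℕ, (-1 : ℂ) ^ j * w ^ j * χ j * ((qbr q α (x + j) : ℝ) : ℂ) ^ m

open Finset

theorem Function.Periodic.exists_norm_le {E : Type*} [SeminormedAddCommGroup E] {f : ℤ → E}
    {c : ℤ} (h : Function.Periodic f c) (hc : 0 < c) : ∃ C, ∀ j, ‖f j‖ ≤ C := by
  obtain ⟨C, hC⟩ := ((Set.finite_Ico 0 c).image f).isBounded.exists_norm_le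
  refine ⟨C, fun j => ?_⟩
  obtain ⟨y, hy, hjy⟩ := h.exists_mem_Ico₀ hc j
  exact hjy ▸ hC _ ⟨y, hy, rfl⟩

section qbr

variable {q α y : ℝ}

theorem qbr_nonneg (hq0 : 0 < q) (hq1 : q < 1) (hα : 0 < α) (hy : 0 ≤ y) : 0 ≤ qbr q α y :=
  div_nonneg (sub_nonneg.2 (Real.rpow_le_one hq0.le hq1.le (by positivity)))
    (sub_nonneg.2 (Real.rpow_le_one hq0.le hq1.le hα.le))

theorem qbr_le (hq0 : 0 < q) (hq1 : q < 1) (hα : 0 < α) :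
    qbr q α y ≤ 1 / (1 - q ^ α) := by
  have : 0 < 1 - q ^ α := sub_pos.2 (Real.rpow_lt_one hq0.le hq1 hα)
  unfold qbr
  gcongr
  linarith [Real.rpow_pos_of_pos hq0 (α * y)]

end qbr

theorem sum_range_neg_one_pow_sub_mul {R : Type*} [CommRing R] (n : ℕ) (f : ℕ → R) :
    ∑ l ∈ range n, (-1) ^ (n - 1 - l) * f l = (-1) ^ (n - 1) * ∑ l ∈ range n, (-1) ^ l * f l := by
  rw [mul_sum]
  refine sum_congr rfl fun l hl => ?_
  have hsplit : (-1 : R) ^ (n - 1) = (-1) ^ (n - 1 - l) * (-1) ^ l := by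
    rw [← pow_add, Nat.sub_add_cancel (Nat.le_sub_one_of_lt (mem_range.1 hl))]
  rw [hsplit, mul_assoc, ← mul_assoc ((-1) ^ l), ← pow_add, Even.neg_one_pow ⟨l, rfl⟩, one_mul]

noncomputable def etilTerm (q α : ℝ) (w : ℂ) (χ : ℤ → ℂ) (m : ℕ) (x : ℝ) (j : ℕ) : ℂ :=
  (-1 : ℂ) ^ j * w ^ j * χ j * ((qbr q α (x + j) : ℝ) : ℂ) ^ m

theorem Etil_eq_tsum_etilTerm (q α : ℝ) (w : ℂ) (χ : ℤ → ℂ) (m : ℕ) (x : ℝ) :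
    Etil q α w χ m x = (1 + (q : ℂ)) * ∑' j, etilTerm q α w χ m x j :=
  rfl

theorem summable_etilTerm {q α : ℝ} (hq0 : 0 < q) (hq1 : q < 1) (hα : 0 < α) {w : ℂ}
    (hw : ‖w‖ < 1) {χ : ℤ → ℂ} {C : ℝ} (hχ : ∀ j : ℕ, ‖χ j‖ ≤ C) (m : ℕ) {x : ℝ} (hx : 0 ≤ x) :
    Summable (etilTerm q α w χ m x) := by
  refine .of_norm_bounded
    ((summable_geometric_of_lt_one (norm_nonneg w) hw).mul_left (C * (1 / (1 - q ^ α)) ^ m))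
    fun j => ?_
  have hnn : 0 ≤ qbr q α (x + j) := qbr_nonneg hq0 hq1 hα (by positivity)
  calc ‖etilTerm q α w χ m x j‖ = ‖w‖ ^ j * (‖χ j‖ * qbr q α (x + j) ^ m) := by
        simp only [etilTerm, norm_mul, norm_pow, norm_neg, norm_one, one_pow, one_mul,
          Complex.norm_real, Real.norm_of_nonneg hnn]
        ring
    _ ≤ ‖w‖ ^ j * (C * (1 / (1 - q ^ α)) ^ m) := by
        gcongr
        exacts [(norm_nonneg _).trans (hχ 0), hχ j, qbr_le hq0 hq1 hα]
    _ = C * (1 / (1 - q ^ α)) ^ m * ‖w‖ ^ j := mul_comm _ _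

theorem pow_mul_etilTerm_add {χ : ℤ → ℂ} {n : ℕ} (hχ : Function.Periodic χ n)
    (q α : ℝ) (w : ℂ) (m : ℕ) (x : ℝ) (j : ℕ) :
    w ^ n * etilTerm q α w χ m (x + n) j = (-1) ^ n * etilTerm q α w χ m x (j + n) := by
  have hsign : (-1 : ℂ) ^ n * (-1) ^ n = 1 := by rw [← pow_add]; exact Even.neg_one_pow ⟨n, rfl⟩
  have hχj : χ ((j + n : ℕ) : ℤ) = χ j := by push_cast; exact hχ j
  have harg : x + n + j = x + ((j + n : ℕ) : ℝ) := by push_cast; ring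
  rw [etilTerm, etilTerm, hχj, harg, pow_add, pow_add]
  linear_combination
    (-(-1 : ℂ) ^ j * w ^ j * w ^ n * χ j * (qbr q α (x + (j + n : ℕ)) : ℂ) ^ m) * hsign

theorem pow_mul_Etil_add {χ : ℤ → ℂ} {n : ℕ} (hχ : Function.Periodic χ n)
    (q α : ℝ) (w : ℂ) (m : ℕ) (x : ℝ) :
    w ^ n * Etil q α w χ m (x + n) =
      (-1) ^ n * ((1 + (q : ℂ)) * ∑' j, etilTerm q α w χ m x (j + n)) := by
  simp only [Etil_eq_tsum_etilTerm, mul_left_comm _ (1 + (q : ℂ)), ← tsum_mul_left,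
    pow_mul_etilTerm_add hχ]

theorem twisted_qEuler_recurrence_general (q α : ℝ) (hq0 : 0 < q) (hq1 : q < 1) (hα : 0 < α)
    (w : ℂ) (hw : ‖w‖ < 1) (d : ℕ)
    (χ : ℤ → ℂ) (hχ : ∀ j : ℤ, χ (j + d) = χ j)
    (m n : ℕ) (hn : 0 < n) (hdn : d ∣ n) :
    w ^ n * Etil q α w χ m n + (-1 : ℂ) ^ (n - 1) * Etil q α w χ m 0
      = (1 + (q : ℂ)) *
          ∑ l ∈ Finset.range n,
            (-1 : ℂ) ^ (n - 1 - l) * χ l * w ^ l * ((qbr q α l : ℝ) : ℂ) ^ m := by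
  have hχn : Function.Periodic χ n := by
    obtain ⟨k, rfl⟩ := hdn
    simpa only [Nat.cast_mul, mul_comm] using Function.Periodic.nat_mul hχ k
  obtain ⟨C, hC⟩ := hχn.exists_norm_le (by exact_mod_cast hn)
  have hsplit := (summable_etilTerm hq0 hq1 hα hw (fun j => hC j) m le_rfl).sum_add_tsum_nat_add n
  have hfinite : ∑ l ∈ range n, (-1 : ℂ) ^ (n - 1 - l) * χ l * w ^ l * ((qbr q α l : ℝ) : ℂ) ^ m
      = (-1) ^ (n - 1) * ∑ l ∈ range n, etilTerm q α w χ m 0 l := by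
    simp only [etilTerm, zero_add, mul_assoc, mul_left_comm (χ _)]
    exact sum_range_neg_one_pow_sub_mul n _
  rw [← zero_add (n : ℝ), pow_mul_Etil_add hχn, Etil_eq_tsum_etilTerm, hfinite,
    ← mul_pow_sub_one hn.ne', ← hsplit]
  ring

/-- `wⁿ Ẽ_{m,q}^{(α,w)}(n|χ) + (-1)^{n-1} Ẽ_{m,q}^{(α,w)}(0|χ)
  = (1+q) Σ_{l<n} (-1)^{n-1-l} χ(l) w^l [l]_{q^α}^m` for `d ∣ n`, `n > 0`. -/
theorem twisted_qEuler_recurrence (q α : ℝ) (hq0 : 0 < q) (hq1 : q < 1) (hα : 0 < α)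
    (w : ℂ) (hw : ‖w‖ < 1) (d : ℕ) (hd : Odd d) (hd0 : 0 < d)
    (χ : ℤ → ℂ) (hχ : ∀ j : ℤ, χ (j + d) = χ j)
    (m n : ℕ) (hn : 0 < n) (hdn : d ∣ n) :
    w ^ n * Etil q α w χ m n + (-1 : ℂ) ^ (n - 1) * Etil q α w χ m 0
      = (1 + (q : ℂ)) *
          ∑ l ∈ Finset.range n,
            (-1 : ℂ) ^ (n - 1 - l) * χ l * w ^ l * ((qbr q α l : ℝ) : ℂ) ^ m :=
  twisted_qEuler_recurrence_general q α hq0 hq1 hα w hw d χ hχ m n hn hdn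
end

section
/- Let 0 < q < 1 and α > 0 be real, w complex with |w| < 1, d an odd positive integer, χ : ℤ → ℂ with period d, x ≥ 0 real, and n a nonnegative integer. Then (1+q) Σ_{m=0}^∞ (-1)^m w^m χ(m) [x+m]_{q^α}^n = ([d]_{q^α}^n / [d]_{-q}) · Σ_{a=0}^{d-1} (-1)^a w^a χ(a) · (1+q^d) Σ_{m=0}^∞ (-1)^m w^{dm} [(x+a)/d + m]_{q^{dα}}^n, where [d]_{-q} = (1 + q^d)/(1 + q). -/
/-! The series is split along the residues of the summation index modulo `d`. Writing
`k = a + d m`, the bracket factors as `[x + k]_{q^α} = [d]_{q^α} [(x + a)/d + m]_{q^{dα}}`,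
periodicity gives `χ k = χ a`, and oddness of `d` gives `(-1)^k = (-1)^a (-1)^m`. Absolute
convergence comes from `|w| < 1` together with the boundedness of `χ` and of the brackets. -/

open Finset Function

theorem Nat.tsum_eq_sum_range_tsum_add_mul {R : Type*} [AddCommGroup R] [UniformSpace R]
    [IsUniformAddGroup R] [CompleteSpace R] [T0Space R] {f : ℕ → R} (hf : Summable f)
    {d : ℕ} (hd : 0 < d) :
    ∑' k, f k = ∑ a ∈ range d, ∑' m, f (a + d * m) := by
  obtain ⟨d, rfl⟩ := Nat.exists_eq_succ_of_ne_zero hd.ne'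
  rw [Nat.sumByResidueClasses hf (d + 1)]
  exact Fin.sum_univ_eq_sum_range (fun a => ∑' m, f (a + (d + 1) * m)) _

theorem Function.Periodic.norm_le_sum_range_s10 {E : Type*} [SeminormedAddCommGroup E]
    {c : ℕ → E} {d : ℕ} (hc : Periodic c d) (hd : 0 < d) (k : ℕ) :
    ‖c k‖ ≤ ∑ a ∈ range d, ‖c a‖ := by
  rw [← hc.map_mod_nat k]
  exact single_le_sum (f := fun a => ‖c a‖) (fun _ _ => norm_nonneg _)
    (mem_range.mpr (Nat.mod_lt k hd))

theorem summable_pow_mul_of_norm_le {𝕜 : Type*} [NormedField 𝕜] [CompleteSpace 𝕜]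
    {w : 𝕜} (hw : ‖w‖ < 1) {c : ℕ → 𝕜} {C : ℝ} (hc : ∀ k, ‖c k‖ ≤ C) :
    Summable fun k => w ^ k * c k := by
  refine .of_norm_bounded ((summable_geometric_of_lt_one (norm_nonneg w) hw).mul_right C)
    fun k => ?_
  rw [norm_mul, norm_pow]
  exact mul_le_mul_of_nonneg_left (hc k) (by positivity)

section qbr

variable {q α : ℝ}

theorem abs_qbr_le (hq0 : 0 < q) (hq1 : q < 1) (hα : 0 < α) {x y : ℝ} (hxy : x ≤ y) :
    |qbr q α y| ≤ (1 + q ^ (α * x)) / (1 - q ^ α) := by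
  have hden : 0 < 1 - q ^ α := sub_pos.mpr (Real.rpow_lt_one hq0.le hq1 hα)
  have hpow : q ^ (α * y) ≤ q ^ (α * x) :=
    Real.rpow_le_rpow_of_exponent_ge hq0 hq1.le (by gcongr)
  have hpos : 0 < q ^ (α * y) := Real.rpow_pos_of_pos hq0 _
  rw [qbr, abs_div, abs_of_pos hden]
  gcongr
  exact abs_le.mpr ⟨by linarith, by linarith⟩

theorem qbr_mul_qbr_div {d : ℝ} (hd : d ≠ 0) (hqd : q ^ (d * α) ≠ 1) (y : ℝ) :
    qbr q α d * qbr q (d * α) (y / d) = qbr q α y := by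
  have hqd_ne : 1 - q ^ (d * α) ≠ 0 := sub_ne_zero.mpr hqd.symm
  have hexp : d * α * (y / d) = α * y := by field_simp
  rw [qbr, qbr, qbr, hexp, mul_comm α d]
  by_cases hα : 1 - q ^ α = 0
  · simp [hα]
  · field_simp

theorem qbr_add_natCast_add_mul {d : ℕ} (hd : d ≠ 0) (hqd : q ^ ((d : ℝ) * α) ≠ 1)
    (x : ℝ) (a m : ℕ) :
    qbr q α (x + ↑(a + d * m)) = qbr q α d * qbr q (d * α) ((x + a) / d + m) := by
  have hsplit : (x + a) / d + m = (x + ↑(a + d * m)) / d := by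
    field_simp
    push_cast
    ring
  rw [hsplit, qbr_mul_qbr_div (by exact_mod_cast hd) hqd]

theorem summable_twisted_qbr_series (hq0 : 0 < q) (hq1 : q < 1) (hα : 0 < α) {w : ℂ}
    (hw : ‖w‖ < 1) {χ : ℕ → ℂ} {d : ℕ} (hχ : Periodic χ d) (hd : 0 < d) (x : ℝ) (n : ℕ) :
    Summable fun k =>
      (-1 : ℂ) ^ k * w ^ k * χ k * ((qbr q α (x + k) : ℝ) : ℂ) ^ n := by
  have hbound (k : ℕ) : ‖χ k * ((qbr q α (x + k) : ℝ) : ℂ) ^ n‖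
      ≤ (∑ a ∈ range d, ‖χ a‖) * ((1 + q ^ (α * x)) / (1 - q ^ α)) ^ n := by
    rw [norm_mul, norm_pow, Complex.norm_real, Real.norm_eq_abs]
    exact mul_le_mul (hχ.norm_le_sum_range_s10 hd k)
      (pow_le_pow_left₀ (abs_nonneg _) (abs_qbr_le hq0 hq1 hα (by simp)) n)
      (by positivity) (by positivity)
  refine (summable_pow_mul_of_norm_le (w := -w) (by simpa using hw) hbound).congr fun k => ?_
  rw [neg_pow]
  ring

end qbr

theorem twisted_qEuler_distribution_general (q α : ℝ) (hq0 : 0 < q) (hq1 : q < 1) (hα : 0 < α)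
    (w : ℂ) (hw : ‖w‖ < 1) (d : ℕ) (hd : Odd d)
    (χ : ℤ → ℂ) (hχ : ∀ j : ℤ, χ (j + d) = χ j) (x : ℝ) (n : ℕ) :
    (1 + (q : ℂ)) *
        ∑' m : ℕ, (-1 : ℂ) ^ m * w ^ m * χ m * ((qbr q α (x + m) : ℝ) : ℂ) ^ n
      = (((qbr q α d : ℝ) : ℂ) ^ n / (((1 + q ^ d) / (1 + q) : ℝ) : ℂ)) *
          ∑ a ∈ Finset.range d, (-1 : ℂ) ^ a * w ^ a * χ a *
            ((1 + ((q ^ d : ℝ) : ℂ)) *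
              ∑' m : ℕ, (-1 : ℂ) ^ m * w ^ (d * m) *
                (((1 - q ^ ((d : ℝ) * α * ((x + a) / d + m))) / (1 - q ^ ((d : ℝ) * α)) : ℝ) : ℂ) ^ n) := by
  have hχ' : Periodic (fun k : ℕ => χ k) d := fun k => by push_cast; exact hχ k
  have hqd : q ^ ((d : ℝ) * α) ≠ 1 :=
    (Real.rpow_lt_one hq0.le hq1 (mul_pos (by exact_mod_cast hd.pos) hα)).ne
  have hterm (a m : ℕ) : (-1 : ℂ) ^ (a + d * m) * w ^ (a + d * m) * χ ↑(a + d * m) *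
        ((qbr q α (x + ↑(a + d * m)) : ℝ) : ℂ) ^ n
      = (-1 : ℂ) ^ a * w ^ a * χ a * ((qbr q α d : ℝ) : ℂ) ^ n *
        ((-1 : ℂ) ^ m * w ^ (d * m) * ((qbr q (d * α) ((x + a) / d + m) : ℝ) : ℂ) ^ n) := by
    have hχam : χ ↑(a + d * m) = χ a := by simpa [mul_comm] using hχ'.nat_mul m a
    rw [hχam, qbr_add_natCast_add_mul hd.pos.ne' hqd, pow_add, pow_add, pow_mul,
      hd.neg_one_pow, Complex.ofReal_mul]
    ring
  have h1qd : (1 + (q : ℂ) ^ d) ≠ 0 := by exact_mod_cast (by positivity : 1 + q ^ d ≠ 0)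
  rw [Nat.tsum_eq_sum_range_tsum_add_mul
    (summable_twisted_qbr_series hq0 hq1 hα hw hχ' hd.pos x n) hd.pos, mul_sum, mul_sum]
  simp only [← qbr.eq_1]
  refine sum_congr rfl fun a _ => ?_
  simp only [hterm, tsum_mul_left]
  push_cast
  field_simp

/-- Distribution (multiplication) theorem for the modified Dirichlet-type twisted
q-Euler polynomials with weight α; here `[d]_{-q} = (1+q^d)/(1+q)`. -/
theorem twisted_qEuler_distribution (q α : ℝ) (hq0 : 0 < q) (hq1 : q < 1) (hα : 0 < α)
    (w : ℂ) (hw : ‖w‖ < 1) (d : ℕ) (hd : Odd d) (hd0 : 0 < d)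
    (χ : ℤ → ℂ) (hχ : ∀ j : ℤ, χ (j + d) = χ j) (x : ℝ) (hx : 0 ≤ x) (n : ℕ) :
    (1 + (q : ℂ)) *
        ∑' m : ℕ, (-1 : ℂ) ^ m * w ^ m * χ m * ((qbr q α (x + m) : ℝ) : ℂ) ^ n
      = (((qbr q α d : ℝ) : ℂ) ^ n / (((1 + q ^ d) / (1 + q) : ℝ) : ℂ)) *
          ∑ a ∈ Finset.range d, (-1 : ℂ) ^ a * w ^ a * χ a *
            ((1 + ((q ^ d : ℝ) : ℂ)) *
              ∑' m : ℕ, (-1 : ℂ) ^ m * w ^ (d * m) *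
                (((1 - q ^ ((d : ℝ) * α * ((x + a) / d + m))) / (1 - q ^ ((d : ℝ) * α)) : ℝ) : ℂ) ^ n) :=
  twisted_qEuler_distribution_general q α hq0 hq1 hα w hw d hd χ hχ x n
end

section
/- Let 0 < q < 1 and α > 0 be real, w complex with |w| < 1, F an odd positive integer, a an integer with 1 ≤ a ≤ F, and n a nonnegative integer. Then the partial zeta function H_q^{(α)}(s, a, w | F) := (1+q) Σ_{m ≡ a (mod F), m > 0} (-1)^m w^m [m]_{q^α}^{-s} evaluated at s = -n satisfies H_q^{(α)}(-n, a, w | F) = ((1+q)/(1+q^F)) · (-1)^a w^a [F]_{q^α}^n · E_{n,q^F}^{(α, w^F)}(a/F), where E_{n,q^F}^{(α, w^F)}(x) := (1+q^F) Σ_{m=0}^∞ (-1)^m w^{Fm} [x+m]_{q^{αF}}^n. -/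
/-- Modified twisted q-Euler polynomial
`E_{n,q^F}^{(α,w^F)}(x) = (1+q^F) Σ_{m≥0} (-1)^m w^{Fm} [x+m]_{q^{αF}}^n`. -/
noncomputable def EpolyF (q α : ℝ) (w : ℂ) (F n : ℕ) (x : ℝ) : ℂ :=
  (1 + (q : ℂ) ^ F) *
    ∑' m : ℕ, (-1 : ℂ) ^ m * w ^ (F * m) * ((qbr q (α * F) (x + m) : ℝ) : ℂ) ^ n

/-! Writing `a + kF = F (a/F + k)`, the bracket factors as `[F]_{q^α} [a/F + k]_{q^{αF}}` and
`(-1)^{kF} = (-1)^k` since `F` is odd, so every term of the series factors and the common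
factor `(-1)^a w^a [F]_{q^α}^n` comes out of the sum. -/

lemma qbr_mul (q α x y : ℝ) (hx : q ^ (α * x) ≠ 1) :
    qbr q α (x * y) = qbr q α x * qbr q (α * x) y := by
  have hx' : 1 - q ^ (α * x) ≠ 0 := sub_ne_zero.mpr hx.symm
  rw [qbr, qbr, qbr, mul_assoc, div_mul_div_comm, mul_comm (1 - q ^ (α * x)),
    mul_div_mul_right _ _ hx']

theorem partial_zeta_special_value_general (q α : ℝ) (hq0 : 0 < q) (hq1 : q < 1) (hα : 0 < α)
    (w : ℂ) (F : ℕ) (hF : Odd F)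
    (a : ℕ) (n : ℕ) :
    (1 + (q : ℂ)) *
        ∑' k : ℕ, (-1 : ℂ) ^ (a + k * F) * w ^ (a + k * F) *
          ((qbr q α ((a : ℝ) + k * F) : ℝ) : ℂ) ^ n
      = ((1 + (q : ℂ)) / (1 + (q : ℂ) ^ F)) * (-1 : ℂ) ^ a * w ^ a *
          ((qbr q α F : ℝ) : ℂ) ^ n * EpolyF q α w F n ((a : ℝ) / F) := by
  have hF0 : (F : ℝ) ≠ 0 := Nat.cast_ne_zero.mpr hF.pos.ne'
  have hqαF : q ^ (α * F) ≠ 1 :=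
    (Real.rpow_lt_one hq0.le hq1 (mul_pos hα (Nat.cast_pos.mpr hF.pos))).ne
  have hterm : ∀ k : ℕ, (-1 : ℂ) ^ (a + k * F) * w ^ (a + k * F) *
          ((qbr q α ((a : ℝ) + k * F) : ℝ) : ℂ) ^ n
      = ((-1 : ℂ) ^ a * w ^ a * ((qbr q α F : ℝ) : ℂ) ^ n) *
        ((-1 : ℂ) ^ k * w ^ (F * k) * ((qbr q (α * F) ((a : ℝ) / F + k) : ℝ) : ℂ) ^ n) := by
    intro k
    have hsplit : (a : ℝ) + k * F = F * ((a : ℝ) / F + k) := by field_simp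
    rw [hsplit, qbr_mul q α F _ hqαF, pow_add, pow_add, mul_comm k F, pow_mul (-1 : ℂ) F,
      hF.neg_one_pow]
    push_cast
    ring
  have hqF : (1 : ℂ) + (q : ℂ) ^ F ≠ 0 := by
    exact_mod_cast (show (0 : ℝ) < 1 + q ^ F by positivity).ne'
  rw [tsum_congr hterm, tsum_mul_left, EpolyF]
  field_simp

/-- Special value `H_q^{(α)}(-n,a,w|F) = ((1+q)/(1+q^F)) (-1)^a w^a [F]_{q^α}^n
  E_{n,q^F}^{(α,w^F)}(a/F)` of the q-partial zeta function. -/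
theorem partial_zeta_special_value (q α : ℝ) (hq0 : 0 < q) (hq1 : q < 1) (hα : 0 < α)
    (w : ℂ) (hw : ‖w‖ < 1) (F : ℕ) (hF : Odd F) (hF0 : 0 < F)
    (a : ℕ) (ha1 : 1 ≤ a) (ha2 : a ≤ F) (n : ℕ) :
    (1 + (q : ℂ)) *
        ∑' k : ℕ, (-1 : ℂ) ^ (a + k * F) * w ^ (a + k * F) *
          ((qbr q α ((a : ℝ) + k * F) : ℝ) : ℂ) ^ n
      = ((1 + (q : ℂ)) / (1 + (q : ℂ) ^ F)) * (-1 : ℂ) ^ a * w ^ a *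
          ((qbr q α F : ℝ) : ℂ) ^ n * EpolyF q α w F n ((a : ℝ) / F) :=
  partial_zeta_special_value_general q α hq0 hq1 hα w F hF a n
end
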